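/- Let L⁰ be the face family generated by the facet list F0={1,2,4,6,9}, F1={3,5,7,8,9}, F2={0,6,7,8,10}, F3={2,3,4,8,9}, F4={0,1,2,5,6,10}, F5={3,4,7,8,10}, F6={1,5,6,7,9}, F7={0,1,2,4,8,10}, F8={3,5,6,7,10}, F9={0,2,6,7,8,9}, F10={1,3,4,5,9,10} (subsets of Fin 11), and let L¹ be the face family generated by the facet list G0={2,4,7,9}, G1={0,4,6,7,10}, G2={0,3,4,7,9}, G3={1,3,5,8,10}, G4={0,3,5,7,10}, G5={1,4,6,8,10}, G6={0,2,4,6,8,9}, G7={1,2,5,6,8,9}, G8={1,2,3,5,7,9}, G9={0,1,3,6,9,10}, G10={2,4,5,7,8,10} (subsets of Fin 11). Then there exists an order isomorphism between L⁰ (ordered by inclusion) and the order dual of L¹ (ordered by inclusion); i.e., the two 3-spheres with f-vector (11,35,35,11) are dual to each other. -/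
import Mathlib


/-- The face family generated by subsets `F 0, …, F (m-1)` of `Fin n`:
`Set.univ` together with all intersections over nonempty index sets. -/
def faceFamily {n m : ℕ} (F : Fin m → Set (Fin n)) : Set (Set (Fin n)) :=
  insert Set.univ {S | ∃ I : Set (Fin m), I.Nonempty ∧ S = ⋂ i ∈ I, F i}

/-- The facet list of the 3-sphere `(11⁰₃₅)`. -/
def facetsA : Fin 11 → Set (Fin 11) :=
  ![{1,2,4,6,9}, {3,5,7,8,9}, {0,6,7,8,10}, {2,3,4,8,9}, {0,1,2,5,6,10},
    {3,4,7,8,10}, {1,5,6,7,9}, {0,1,2,4,8,10}, {3,5,6,7,10}, {0,2,6,7,8,9},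
    {1,3,4,5,9,10}]

/-- The facet list of the 3-sphere `(11¹₃₅)`. -/
def facetsB : Fin 11 → Set (Fin 11) :=
  ![{2,4,7,9}, {0,4,6,7,10}, {0,3,4,7,9}, {1,3,5,8,10}, {0,3,5,7,10},
    {1,4,6,8,10}, {0,2,4,6,8,9}, {1,2,5,6,8,9}, {1,2,3,5,7,9}, {0,1,3,6,9,10},
    {2,4,5,7,8,10}]

def finA : Fin 11 → Finset (Fin 11) :=
  ![{1,2,4,6,9}, {3,5,7,8,9}, {0,6,7,8,10}, {2,3,4,8,9}, {0,1,2,5,6,10}, {3,4,7,8,10}, {1,5,6,7,9}, {0,1,2,4,8,10}, {3,5,6,7,10}, {0,2,6,7,8,9}, {1,3,4,5,9,10}]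
def finB : Fin 11 → Finset (Fin 11) :=
  ![{2,4,7,9}, {0,4,6,7,10}, {0,3,4,7,9}, {1,3,5,8,10}, {0,3,5,7,10}, {1,4,6,8,10}, {0,2,4,6,8,9}, {1,2,5,6,8,9}, {1,2,3,5,7,9}, {0,1,3,6,9,10}, {2,4,5,7,8,10}]

lemma hA : ∀ i, facetsA i = ↑(finA i) := by
  intro i
  fin_cases i
  · show ({1,2,4,6,9} : Set (Fin 11)) = ↑(({1,2,4,6,9} : Finset (Fin 11))); simp
  · show ({3,5,7,8,9} : Set (Fin 11)) = ↑(({3,5,7,8,9} : Finset (Fin 11))); simp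
  · show ({0,6,7,8,10} : Set (Fin 11)) = ↑(({0,6,7,8,10} : Finset (Fin 11))); simp
  · show ({2,3,4,8,9} : Set (Fin 11)) = ↑(({2,3,4,8,9} : Finset (Fin 11))); simp
  · show ({0,1,2,5,6,10} : Set (Fin 11)) = ↑(({0,1,2,5,6,10} : Finset (Fin 11))); simp
  · show ({3,4,7,8,10} : Set (Fin 11)) = ↑(({3,4,7,8,10} : Finset (Fin 11))); simp
  · show ({1,5,6,7,9} : Set (Fin 11)) = ↑(({1,5,6,7,9} : Finset (Fin 11))); simp
  · show ({0,1,2,4,8,10} : Set (Fin 11)) = ↑(({0,1,2,4,8,10} : Finset (Fin 11))); simp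
  · show ({3,5,6,7,10} : Set (Fin 11)) = ↑(({3,5,6,7,10} : Finset (Fin 11))); simp
  · show ({0,2,6,7,8,9} : Set (Fin 11)) = ↑(({0,2,6,7,8,9} : Finset (Fin 11))); simp
  · show ({1,3,4,5,9,10} : Set (Fin 11)) = ↑(({1,3,4,5,9,10} : Finset (Fin 11))); simp

lemma hB : ∀ i, facetsB i = ↑(finB i) := by
  intro i
  fin_cases i
  · show ({2,4,7,9} : Set (Fin 11)) = ↑(({2,4,7,9} : Finset (Fin 11))); simp
  · show ({0,4,6,7,10} : Set (Fin 11)) = ↑(({0,4,6,7,10} : Finset (Fin 11))); simp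
  · show ({0,3,4,7,9} : Set (Fin 11)) = ↑(({0,3,4,7,9} : Finset (Fin 11))); simp
  · show ({1,3,5,8,10} : Set (Fin 11)) = ↑(({1,3,5,8,10} : Finset (Fin 11))); simp
  · show ({0,3,5,7,10} : Set (Fin 11)) = ↑(({0,3,5,7,10} : Finset (Fin 11))); simp
  · show ({1,4,6,8,10} : Set (Fin 11)) = ↑(({1,4,6,8,10} : Finset (Fin 11))); simp
  · show ({0,2,4,6,8,9} : Set (Fin 11)) = ↑(({0,2,4,6,8,9} : Finset (Fin 11))); simp
  · show ({1,2,5,6,8,9} : Set (Fin 11)) = ↑(({1,2,5,6,8,9} : Finset (Fin 11))); simp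
  · show ({1,2,3,5,7,9} : Set (Fin 11)) = ↑(({1,2,3,5,7,9} : Finset (Fin 11))); simp
  · show ({0,1,3,6,9,10} : Set (Fin 11)) = ↑(({0,1,3,6,9,10} : Finset (Fin 11))); simp
  · show ({2,4,5,7,8,10} : Set (Fin 11)) = ↑(({2,4,5,7,8,10} : Finset (Fin 11))); simp

lemma transpose : ∀ x i : Fin 11, x ∈ facetsA i ↔ i ∈ facetsB x := by
  have key : ∀ x i : Fin 11, x ∈ finA i ↔ i ∈ finB x := by decide
  intro x i
  rw [hA, hB, Finset.mem_coe, Finset.mem_coe]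
  exact key x i

namespace SpheresDual

def phi (S : Set (Fin 11)) : Set (Fin 11) := ⋂ i ∈ S, facetsB i
def psi (T : Set (Fin 11)) : Set (Fin 11) := ⋂ i ∈ T, facetsA i

lemma psi_antitone {T T' : Set (Fin 11)} (h : T ⊆ T') : psi T' ⊆ psi T := by
  intro x hx
  simp only [psi, Set.mem_iInter] at *
  exact fun j hj => hx j (h hj)

lemma phi_antitone {S S' : Set (Fin 11)} (h : S ⊆ S') : phi S' ⊆ phi S := by
  intro x hx
  simp only [phi, Set.mem_iInter] at *
  exact fun j hj => hx j (h hj)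

lemma sub_psi_phi (S : Set (Fin 11)) : S ⊆ psi (phi S) := by
  intro x hx
  simp only [psi, phi, Set.mem_iInter] at *
  intro j hj
  exact (transpose x j).mpr (hj x hx)

lemma sub_phi_psi (T : Set (Fin 11)) : T ⊆ phi (psi T) := by
  intro x hx
  simp only [psi, phi, Set.mem_iInter] at *
  intro j hj
  exact (transpose j x).mp (hj x hx)

lemma psi_phi_psi (T : Set (Fin 11)) : psi (phi (psi T)) = psi T :=
  subset_antisymm (psi_antitone (sub_phi_psi T)) (sub_psi_phi (psi T))

lemma phi_psi_phi (S : Set (Fin 11)) : phi (psi (phi S)) = phi S :=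
  subset_antisymm (phi_antitone (sub_psi_phi S)) (sub_phi_psi (phi S))

lemma psi_mem (T : Set (Fin 11)) : psi T ∈ faceFamily facetsA := by
  rcases T.eq_empty_or_nonempty with rfl | hT
  · left; simp [psi]
  · right; exact ⟨T, hT, rfl⟩

lemma phi_mem (S : Set (Fin 11)) : phi S ∈ faceFamily facetsB := by
  rcases S.eq_empty_or_nonempty with rfl | hS
  · left; simp [phi]
  · right; exact ⟨S, hS, rfl⟩

lemma exists_psi {S : Set (Fin 11)} (hS : S ∈ faceFamily facetsA) :
    ∃ T, S = psi T := by
  rcases hS with h | ⟨I, _, rfl⟩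
  · exact ⟨∅, by simp [h, psi]⟩
  · exact ⟨I, rfl⟩

lemma exists_phi {T : Set (Fin 11)} (hT : T ∈ faceFamily facetsB) :
    ∃ S, T = phi S := by
  rcases hT with h | ⟨I, _, rfl⟩
  · exact ⟨∅, by simp [h, phi]⟩
  · exact ⟨I, rfl⟩

lemma psi_phi_eq {S : Set (Fin 11)} (hS : S ∈ faceFamily facetsA) :
    psi (phi S) = S := by
  obtain ⟨T, rfl⟩ := exists_psi hS
  exact psi_phi_psi T

lemma phi_psi_eq {T : Set (Fin 11)} (hT : T ∈ faceFamily facetsB) :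
    phi (psi T) = T := by
  obtain ⟨S, rfl⟩ := exists_phi hT
  exact phi_psi_phi S

noncomputable def theIso : ↥(faceFamily facetsA) ≃o (↥(faceFamily facetsB))ᵒᵈ where
  toFun S := OrderDual.toDual ⟨phi S.1, phi_mem S.1⟩
  invFun T := ⟨psi (OrderDual.ofDual T).1, psi_mem _⟩
  left_inv S := Subtype.ext (psi_phi_eq S.2)
  right_inv T := Subtype.ext (phi_psi_eq (OrderDual.ofDual T).2)
  map_rel_iff' := by
    intro a b
    constructor
    · intro h
      have h' : phi b.1 ⊆ phi a.1 := h
      have := psi_antitone h'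
      rw [psi_phi_eq a.2, psi_phi_eq b.2] at this
      exact this
    · intro h
      exact (phi_antitone h : phi b.1 ⊆ phi a.1)

end SpheresDual

/-- The two 3-spheres with f-vector `(11,35,35,11)` are dual to each other:
the face family of the first is order-isomorphic to the order dual
of the face family of the second. -/
theorem spheres_11_35_35_11_dual :
    Nonempty (↥(faceFamily facetsA) ≃o (↥(faceFamily facetsB))ᵒᵈ) := by
  exact ⟨SpheresDual.theIso⟩
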